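/- Let Γ be a finite graph with weight μ : VΓ → [0,∞) of positive total mass, p ≥ 1, and 0 < α < 1/4. Then the (p,α)-capacity satisfies h^p_μ(Γ) ≤ (2/α^{1/p}) C^{p,α}(Γ,μ), where h^p_μ is the weighted Poincaré constant; in particular in the unweighted case (μ = counting measure), h^p(Γ) ≤ (2/α^{1/p}) C^{p,α}(Γ). -/
import Mathlib


/-- The max-gradient of `f` at `x`: `sup` of `|f x - f y|` over neighbours `y`. -/
noncomputable def grad {V : Type*} (Adj : V → V → Prop) (f : V → ℝ) (x : V) : ℝ :=
  ⨆ y, ⨆ (_ : Adj x y), |f x - f y|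

/-- The weighted `Lᵖ` norm `‖g‖_{μ,p} = (∑ |g x|^p μ x)^{1/p}`. -/
noncomputable def wnorm {V : Type*} [Fintype V] (μ : V → ℝ) (p : ℝ) (g : V → ℝ) : ℝ :=
  (∑ x, |g x| ^ p * μ x) ^ (1 / p)

/-- The weighted `Lᵖ`-Poincaré constant: infimum of `‖∇g‖_{μ,p} / ‖g - g_Γ‖_{μ,p}`
over nonconstant `g`, where `g_Γ` is the `μ`-mean of `g`. -/
noncomputable def wpoincare {V : Type*} [Fintype V] (p : ℝ) (Adj : V → V → Prop)
    (μ : V → ℝ) : ℝ :=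
  sInf { r | ∃ g : V → ℝ, (∃ x y, g x ≠ g y) ∧
    r = wnorm μ p (grad Adj g) /
        wnorm μ p (fun x => g x - (∑ y, g y * μ y) / (∑ y, μ y)) }

lemma clamp_lip (a b : ℝ) : |min 1 (max 0 a) - min 1 (max 0 b)| ≤ |a - b| := by
  simp only [min_def, max_def]
  split_ifs <;> cases' abs_cases (a - b) with h h <;>
    rw [abs_sub_le_iff] <;> constructor <;> linarith [h.1, h.2]

lemma inner_sup_nonneg {V : Type*} (Adj : V → V → Prop) (f : V → ℝ) (x y : V) :
    (0:ℝ) ≤ ⨆ (_ : Adj x y), |f x - f y| := by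
  by_cases h : Adj x y
  · rw [ciSup_pos h]; exact abs_nonneg _
  · haveI : IsEmpty (Adj x y) := ⟨h⟩
    rw [Real.iSup_of_isEmpty]

lemma inner_le_grad {V : Type*} [Fintype V] (Adj : V → V → Prop) (f : V → ℝ) (x y : V) :
    (⨆ (_ : Adj x y), |f x - f y|) ≤ grad Adj f x :=
  le_ciSup (f := fun y => ⨆ (_ : Adj x y), |f x - f y|)
    (Set.Finite.bddAbove (Set.finite_range _)) y

lemma grad_nonneg {V : Type*} [Fintype V] [Nonempty V] (Adj : V → V → Prop) (f : V → ℝ)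
    (x : V) : 0 ≤ grad Adj f x := by
  obtain ⟨y⟩ : Nonempty V := inferInstance
  exact (inner_sup_nonneg Adj f x y).trans (inner_le_grad Adj f x y)

lemma grad_mono {V : Type*} [Fintype V] [Nonempty V] (Adj : V → V → Prop) (f g : V → ℝ)
    (h : ∀ x y, Adj x y → |g x - g y| ≤ |f x - f y|) (x : V) :
    grad Adj g x ≤ grad Adj f x := by
  refine Real.iSup_le (fun y => ?_) (grad_nonneg Adj f x)
  by_cases hxy : Adj x y
  · rw [ciSup_pos hxy]
    calc |g x - g y| ≤ |f x - f y| := h x y hxy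
      _ = ⨆ (_ : Adj x y), |f x - f y| :=
        (ciSup_pos (p := Adj x y) (f := fun _ => |f x - f y|) hxy).symm
      _ ≤ grad Adj f x := inner_le_grad Adj f x y
  · haveI : IsEmpty (Adj x y) := ⟨hxy⟩
    rw [Real.iSup_of_isEmpty]; exact grad_nonneg Adj f x

lemma wnorm_nonneg {V : Type*} [Fintype V] (μ : V → ℝ) (hμ : ∀ x, 0 ≤ μ x) (p : ℝ)
    (g : V → ℝ) : 0 ≤ wnorm μ p g :=
  Real.rpow_nonneg (Finset.sum_nonneg fun x _ =>
    mul_nonneg (Real.rpow_nonneg (abs_nonneg _) _) (hμ x)) _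

lemma wnorm_mono {V : Type*} [Fintype V] (μ : V → ℝ) (hμ : ∀ x, 0 ≤ μ x) (p : ℝ)
    (hp : 0 < p) (u v : V → ℝ) (h : ∀ x, |u x| ≤ |v x|) :
    wnorm μ p u ≤ wnorm μ p v := by
  apply Real.rpow_le_rpow (Finset.sum_nonneg fun x _ =>
    mul_nonneg (Real.rpow_nonneg (abs_nonneg _) _) (hμ x))
  · exact Finset.sum_le_sum fun x _ =>
      mul_le_mul_of_nonneg_right (Real.rpow_le_rpow (abs_nonneg _) (h x) hp.le) (hμ x)
  · positivity

/-- Weighted capacity vs. Poincaré constant: for every `f` that is admissible for the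
`(p,α)`-capacity (i.e. `μ{f ≤ 0} ≥ α μ(Γ)` and `μ{f ≥ 1} ≥ α μ(Γ)`),
`h^p_μ(Γ) ≤ (2/α^{1/p}) · μ(Γ)^{-1/p} ‖∇f‖_{μ,p}`; that is,
`h^p_μ(Γ) ≤ (2/α^{1/p}) · C^{p,α}(Γ,μ)`. -/
theorem stmt6 {V : Type*} [Fintype V] [Nonempty V] (G : SimpleGraph V) (μ : V → ℝ)
    (hμ : ∀ x, 0 ≤ μ x) (hpos : 0 < ∑ x, μ x)
    (p α : ℝ) (hp : 1 ≤ p) (hα0 : 0 < α) (hα : α < 1 / 4)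
    (f : V → ℝ)
    (hle : α * (∑ x, μ x) ≤ ∑ x, (if f x ≤ 0 then μ x else 0))
    (hge : α * (∑ x, μ x) ≤ ∑ x, (if 1 ≤ f x then μ x else 0)) :
    wpoincare p G.Adj μ
      ≤ (2 / α ^ (1 / p)) * ((∑ x, μ x) ^ (-(1 / p)) * wnorm μ p (grad G.Adj f)) := by
  have hp0 : 0 < p := lt_of_lt_of_le one_pos hp
  have hpne : p ≠ 0 := hp0.ne'
  set S := ∑ x, μ x with hS
  set g : V → ℝ := fun x => min 1 (max 0 (f x)) with hg
  -- g is nonconstant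
  have hαS : 0 < α * S := mul_pos hα0 hpos
  have hx0 : ∃ x, f x ≤ 0 := by
    by_contra h
    push_neg at h
    have : (∑ x, (if f x ≤ 0 then μ x else 0)) = 0 :=
      Finset.sum_eq_zero fun x _ => if_neg (not_le.mpr (h x))
    rw [this] at hle; linarith
  have hx1 : ∃ x, 1 ≤ f x := by
    by_contra h
    push_neg at h
    have : (∑ x, (if 1 ≤ f x then μ x else 0)) = 0 :=
      Finset.sum_eq_zero fun x _ => if_neg (not_le.mpr (h x))
    rw [this] at hge; linarith
  obtain ⟨x0, hx0⟩ := hx0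
  obtain ⟨x1, hx1⟩ := hx1
  have hg0 : g x0 = 0 := by simp [hg, max_eq_left hx0]
  have hg1 : g x1 = 1 := by
    simp only [hg]
    rw [max_eq_right (le_trans zero_le_one hx1), min_eq_left hx1]
  have hgval : ∀ x, f x ≤ 0 → g x = 0 := fun x hx => by simp [hg, max_eq_left hx]
  have hgval1 : ∀ x, 1 ≤ f x → g x = 1 := fun x hx => by
    simp only [hg]; rw [max_eq_right (le_trans zero_le_one hx), min_eq_left hx]
  set m : ℝ := (∑ y, g y * μ y) / S with hm
  set D : ℝ := wnorm μ p (fun x => g x - m) with hD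
  set N : ℝ := wnorm μ p (grad G.Adj g) with hN
  set Nf : ℝ := wnorm μ p (grad G.Adj f) with hNf
  -- membership
  have hmem : N / D ∈ { r | ∃ g : V → ℝ, (∃ x y, g x ≠ g y) ∧
      r = wnorm μ p (grad G.Adj g) /
          wnorm μ p (fun x => g x - (∑ y, g y * μ y) / (∑ y, μ y)) } := by
    exact ⟨g, ⟨x0, x1, by rw [hg0, hg1]; norm_num⟩, rfl⟩
  have hbdd : BddBelow { r | ∃ g : V → ℝ, (∃ x y, g x ≠ g y) ∧
      r = wnorm μ p (grad G.Adj g) /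
          wnorm μ p (fun x => g x - (∑ y, g y * μ y) / (∑ y, μ y)) } := by
    refine ⟨0, fun r hr => ?_⟩
    obtain ⟨u, _, rfl⟩ := hr
    exact div_nonneg (wnorm_nonneg μ hμ p _) (wnorm_nonneg μ hμ p _)
  have h1 : wpoincare p G.Adj μ ≤ N / D := csInf_le hbdd hmem
  -- N ≤ Nf
  have hNle : N ≤ Nf := by
    apply wnorm_mono μ hμ p hp0
    intro x
    rw [abs_of_nonneg (grad_nonneg _ g x), abs_of_nonneg (grad_nonneg _ f x)]
    exact grad_mono G.Adj f g (fun x y _ => clamp_lip (f x) (f y)) x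
  -- D lower bound
  set c : ℝ := (1/2) * (α * S) ^ (1/p) with hc
  have hαS' : (0:ℝ) ≤ α * S := hαS.le
  have hcpos : 0 < c := by
    apply mul_pos (by norm_num)
    exact Real.rpow_pos_of_pos hαS _
  have hsum_ge : (1/2 : ℝ) ^ p * (α * S) ≤ ∑ x, |g x - m| ^ p * μ x := by
    have hhalf : (0:ℝ) ≤ (1/2 : ℝ) ^ p := Real.rpow_nonneg (by norm_num) _
    rcases le_total m (1/2) with hm2 | hm2
    · calc (1/2 : ℝ) ^ p * (α * S) ≤ (1/2 : ℝ) ^ p * ∑ x, (if 1 ≤ f x then μ x else 0) :=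
            mul_le_mul_of_nonneg_left hge hhalf
        _ = ∑ x, (if 1 ≤ f x then (1/2:ℝ) ^ p * μ x else 0) := by
            rw [Finset.mul_sum]; exact Finset.sum_congr rfl fun x _ => by
              split_ifs <;> simp
        _ ≤ ∑ x, |g x - m| ^ p * μ x := by
            apply Finset.sum_le_sum
            intro x _
            split_ifs with hx
            · apply mul_le_mul_of_nonneg_right _ (hμ x)
              apply Real.rpow_le_rpow (by norm_num) _ hp0.le
              rw [hgval1 x hx, abs_of_nonneg (by linarith)]
              linarith
            · exact mul_nonneg (Real.rpow_nonneg (abs_nonneg _) _) (hμ x)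
    · calc (1/2 : ℝ) ^ p * (α * S) ≤ (1/2 : ℝ) ^ p * ∑ x, (if f x ≤ 0 then μ x else 0) :=
            mul_le_mul_of_nonneg_left hle hhalf
        _ = ∑ x, (if f x ≤ 0 then (1/2:ℝ) ^ p * μ x else 0) := by
            rw [Finset.mul_sum]; exact Finset.sum_congr rfl fun x _ => by
              split_ifs <;> simp
        _ ≤ ∑ x, |g x - m| ^ p * μ x := by
            apply Finset.sum_le_sum
            intro x _
            split_ifs with hx
            · apply mul_le_mul_of_nonneg_right _ (hμ x)
              apply Real.rpow_le_rpow (by norm_num) _ hp0.le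
              rw [hgval x hx, zero_sub, abs_neg, abs_of_nonneg (by linarith)]
              linarith
            · exact mul_nonneg (Real.rpow_nonneg (abs_nonneg _) _) (hμ x)
  have hDge : c ≤ D := by
    have : ((1/2 : ℝ) ^ p * (α * S)) ^ (1/p) ≤ D := by
      apply Real.rpow_le_rpow (by positivity) hsum_ge (by positivity)
    calc c = ((1/2 : ℝ) ^ p * (α * S)) ^ (1/p) := by
          rw [Real.mul_rpow (Real.rpow_nonneg (by norm_num) _) hαS',
            ← Real.rpow_mul (by norm_num : (0:ℝ) ≤ 1/2),
            mul_one_div_cancel hpne, Real.rpow_one]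
      _ ≤ D := this
  have hNf0 : 0 ≤ Nf := wnorm_nonneg μ hμ p _
  have h2 : N / D ≤ Nf / c := div_le_div₀ hNf0 hNle hcpos hDge
  have h3 : Nf / c = (2 / α ^ (1 / p)) * (S ^ (-(1 / p)) * Nf) := by
    have ha : (0:ℝ) < α ^ (1/p) := Real.rpow_pos_of_pos hα0 _
    have hs : (0:ℝ) < S ^ (1/p) := Real.rpow_pos_of_pos hpos _
    rw [hc, Real.mul_rpow hα0.le hpos.le, Real.rpow_neg hpos.le]
    field_simp
  calc wpoincare p G.Adj μ ≤ N / D := h1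
    _ ≤ Nf / c := h2
    _ = (2 / α ^ (1 / p)) * (S ^ (-(1 / p)) * Nf) := h3
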